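/- arXiv:1301.6901 — 2 statements merged into one kernel-verified Lean document; each statement's English description precedes it below -/
import Mathlib

section
/- Let U = T_z be the unilateral shift on H². The block operator A := [[U*, U* + 2U],[U* + 2U, U*]] on H² ⊕ H² is quasinormal (and therefore subnormal), and A is not normal. In particular A is a subnormal completion of the partial block Toeplitz matrix with diagonal entries U*, U* whose off-diagonal entries are Toeplitz operators. -/
noncomputable section
open MeasureTheory Complex Filter Matrix
open scoped ENNReal ComplexConjugate Real

namespace Paper

instance fact_two_pi_pos : Fact (0 < 2 * Real.pi) := ⟨by positivity⟩
abbrev 𝕋 : Type := AddCircle (2 * Real.pi)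
abbrev μh : Measure 𝕋 := AddCircle.haarAddCircle

variable {E : Type} [NormedAddCommGroup E] [NormedSpace ℂ E]

section smul

lemma memLp_smul (φ : 𝕋 → ℂ) (hm : AEStronglyMeasurable φ μh) (C : ℝ)
    (hb : ∀ᵐ x ∂μh, ‖φ x‖ ≤ C) (f : Lp E 2 μh) :
    MemLp (fun x => φ x • (f : 𝕋 → E) x) 2 μh := by
  refine MemLp.of_le_mul (c := C) (Lp.memLp f) (hm.smul (Lp.aestronglyMeasurable f)) ?_
  filter_upwards [hb] with x hx
  rw [norm_smul]
  exact mul_le_mul_of_nonneg_right hx (norm_nonneg _)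

lemma eLpNorm_smul_le (φ : 𝕋 → ℂ) (C : ℝ)
    (hb : ∀ᵐ x ∂μh, ‖φ x‖ ≤ C) (f : Lp E 2 μh) :
    eLpNorm (fun x => φ x • (f : 𝕋 → E) x) 2 μh ≤
      ENNReal.ofReal (max C 0) * eLpNorm (f : 𝕋 → E) 2 μh := by
  have h1 : eLpNorm (fun x => φ x • (f : 𝕋 → E) x) 2 μh ≤
      eLpNorm ((max C 0 : ℝ) • (f : 𝕋 → E)) 2 μh := by
    refine eLpNorm_mono_ae ?_
    filter_upwards [hb] with x hx
    rw [Pi.smul_apply, norm_smul, norm_smul, Real.norm_eq_abs,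
      _root_.abs_of_nonneg (le_max_right C 0)]
    exact mul_le_mul_of_nonneg_right (hx.trans (le_max_left _ _)) (norm_nonneg _)
  refine h1.trans_eq ?_
  rw [eLpNorm_const_smul]
  congr 1
  rw [← ofReal_norm, Real.norm_eq_abs, _root_.abs_of_nonneg (le_max_right C 0)]

/-- Pointwise multiplication by a bounded measurable scalar function, as a bounded operator
on a vector-valued `L²` space. -/
def smulCLMOf (φ : 𝕋 → ℂ) (hm : AEStronglyMeasurable φ μh) (C : ℝ)
    (hb : ∀ᵐ x ∂μh, ‖φ x‖ ≤ C) : Lp E 2 μh →L[ℂ] Lp E 2 μh :=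
  LinearMap.mkContinuous
    { toFun := fun f => (memLp_smul φ hm C hb f).toLp _
      map_add' := by
        intro f g
        refine Lp.ext ?_
        filter_upwards [MemLp.coeFn_toLp (memLp_smul φ hm C hb (f + g)),
          MemLp.coeFn_toLp (memLp_smul φ hm C hb f),
          MemLp.coeFn_toLp (memLp_smul φ hm C hb g),
          Lp.coeFn_add f g,
          Lp.coeFn_add ((memLp_smul φ hm C hb f).toLp _)
            ((memLp_smul φ hm C hb g).toLp _)] with x h1 h2 h3 h4 h5
        simp only [h1, h4, h5, Pi.add_apply, h2, h3, smul_add]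
      map_smul' := by
        intro c f
        refine Lp.ext ?_
        filter_upwards [MemLp.coeFn_toLp (memLp_smul φ hm C hb (c • f)),
          MemLp.coeFn_toLp (memLp_smul φ hm C hb f),
          Lp.coeFn_smul c f,
          Lp.coeFn_smul c ((memLp_smul φ hm C hb f).toLp _)] with x h1 h2 h3 h4
        simp only [h1, h3, h4, Pi.smul_apply, h2, RingHom.id_apply]
        exact smul_comm _ _ _ }
    (max C 0)
    (by
      intro f
      simp only [LinearMap.coe_mk, AddHom.coe_mk]
      rw [Lp.norm_toLp, Lp.norm_def]
      have := eLpNorm_smul_le (E := E) φ C hb f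
      calc (eLpNorm (fun x => φ x • (f : 𝕋 → E) x) 2 μh).toReal
          ≤ (ENNReal.ofReal (max C 0) * eLpNorm (f : 𝕋 → E) 2 μh).toReal := by
            refine ENNReal.toReal_mono ?_ this
            exact ENNReal.mul_ne_top ENNReal.ofReal_ne_top (Lp.eLpNorm_ne_top f)
        _ = (max C 0) * (eLpNorm (f : 𝕋 → E) 2 μh).toReal := by
            rw [ENNReal.toReal_mul, ENNReal.toReal_ofReal (le_max_right _ _)])

open Classical in
/-- Pointwise multiplication by a scalar function, as a bounded operator on a vector-valued
`L²` space (junk value `0` if the symbol is not essentially bounded measurable). -/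
def smulCLM (φ : 𝕋 → ℂ) : Lp E 2 μh →L[ℂ] Lp E 2 μh :=
  if h : AEStronglyMeasurable φ μh ∧ ∃ C : ℝ, ∀ᵐ x ∂μh, ‖φ x‖ ≤ C then
    smulCLMOf φ h.1 h.2.choose h.2.choose_spec
  else 0

lemma smulCLM_coeFn (φ : 𝕋 → ℂ) (hm : AEStronglyMeasurable φ μh)
    (hb : ∃ C : ℝ, ∀ᵐ x ∂μh, ‖φ x‖ ≤ C) (f : Lp E 2 μh) :
    (smulCLM φ f : 𝕋 → E) =ᵐ[μh] fun x => φ x • (f : 𝕋 → E) x := by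
  classical
  unfold smulCLM
  rw [dif_pos ⟨hm, hb⟩]
  exact MemLp.coeFn_toLp (memLp_smul φ hm _ hb.choose_spec f)

end smul

/-- Composition with the reflection `x ↦ -x` (i.e. `z ↦ z̄`) as an operator on `L²`. -/
def reflCLM : Lp E 2 μh →L[ℂ] Lp E 2 μh :=
  (Lp.compMeasurePreservingₗᵢ (E := E) (p := 2) ℂ (fun x : 𝕋 => -x)
    (Measure.measurePreserving_neg μh)).toContinuousLinearMap

/-- The boundary coordinate `z = e^{it}` on the circle. -/
def ζ (x : 𝕋) : ℂ := (AddCircle.toCircle x : ℂ)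

/-- Scalar `L²` space of the circle. -/
abbrev L2 := Lp ℂ 2 μh

/-- The Hardy space `H²`: the closed span in `L²` of the nonnegative Fourier modes. -/
def H2 : Submodule ℂ L2 :=
  (Submodule.span ℂ (Set.range fun n : ℕ => fourierLp 2 (n : ℤ))).topologicalClosure

instance : CompleteSpace H2 :=
  IsClosed.completeSpace_coe (hs := Submodule.isClosed_topologicalClosure _)

/-- `ℂⁿ`-valued `L²` space of the circle. -/
abbrev L2v (n : ℕ) := Lp (EuclideanSpace ℂ (Fin n)) 2 μh

/-- The vector-valued Hardy space `H²_{ℂⁿ}`: the closed span of the analytic monomials. -/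
def H2v (n : ℕ) : Submodule ℂ (L2v n) :=
  (Submodule.span ℂ (Set.range fun q : ℕ × Fin n =>
    (ContinuousLinearMap.toSpanSingleton ℂ
      (EuclideanSpace.single q.2 (1 : ℂ))).compLp (fourierLp 2 (q.1 : ℤ)))).topologicalClosure

instance (n : ℕ) : CompleteSpace (H2v n) :=
  IsClosed.completeSpace_coe (hs := Submodule.isClosed_topologicalClosure _)

/-- Pointwise multiplication by a matrix-valued function, as an operator on `ℂⁿ`-valued `L²`
(built from its scalar matrix entries). -/
def matMulCLM {n : ℕ} (Φ : 𝕋 → Matrix (Fin n) (Fin n) ℂ) : L2v n →L[ℂ] L2v n :=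
  ∑ i : Fin n, ∑ j : Fin n,
    (ContinuousLinearMap.toSpanSingleton ℂ (EuclideanSpace.single i (1 : ℂ))).compLpL 2 μh ∘L
      (smulCLM (E := ℂ) fun x => Φ x i j) ∘L (EuclideanSpace.proj j).compLpL 2 μh

/-- The unitary operator `J` on `L²_{ℂⁿ}`, `(J F)(z) = z̄ ⬝ F(z̄)`. -/
def Jop (n : ℕ) : L2v n →L[ℂ] L2v n :=
  smulCLM (E := EuclideanSpace ℂ (Fin n)) (fun x => conj (ζ x)) ∘L reflCLM

/-- The Toeplitz operator with scalar symbol `φ`, acting on `H²`. -/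
def toeplitz (φ : 𝕋 → ℂ) : H2 →L[ℂ] H2 :=
  Submodule.orthogonalProjectionOnto H2 ∘L smulCLM (E := ℂ) φ ∘L H2.subtypeL

/-- The block Toeplitz operator with matrix symbol `Φ`, acting on `H²_{ℂⁿ}`. -/
def toeplitzM {n : ℕ} (Φ : 𝕋 → Matrix (Fin n) (Fin n) ℂ) : H2v n →L[ℂ] H2v n :=
  Submodule.orthogonalProjectionOnto (H2v n) ∘L matMulCLM Φ ∘L (H2v n).subtypeL

/-- The block Hankel operator with matrix symbol `Φ`, `H_Φ F = J P⊥ (Φ F)`,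
acting on `H²_{ℂⁿ}`. -/
def hankelM {n : ℕ} (Φ : 𝕋 → Matrix (Fin n) (Fin n) ℂ) : H2v n →L[ℂ] H2v n :=
  Submodule.orthogonalProjectionOnto (H2v n) ∘L Jop n ∘L
    (ContinuousLinearMap.id ℂ (L2v n) - (H2v n).subtypeL ∘L Submodule.orthogonalProjectionOnto (H2v n)) ∘L
      matMulCLM Φ ∘L (H2v n).subtypeL

section OperatorTheory

variable {H : Type} [NormedAddCommGroup H] [InnerProductSpace ℂ H] [CompleteSpace H]

open ContinuousLinearMap in
/-- The commutator `[S, T] = S T − T S`. -/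
def commutatorOp (S T : H →L[ℂ] H) : H →L[ℂ] H := S ∘L T - T ∘L S

open ContinuousLinearMap in
/-- The self-commutator `[T*, T] = T*T − TT*`. -/
def selfCommutator (T : H →L[ℂ] H) : H →L[ℂ] H := commutatorOp (adjoint T) T

open ContinuousLinearMap in
/-- A bounded operator is normal if it commutes with its adjoint. -/
def IsNormalOp (T : H →L[ℂ] H) : Prop := adjoint T ∘L T = T ∘L adjoint T

/-- A bounded operator is hyponormal if its self-commutator `[T*,T]` is positive. -/
def IsHyponormalOp (T : H →L[ℂ] H) : Prop := (selfCommutator T).IsPositive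

open ContinuousLinearMap in
/-- A bounded operator is quasinormal if it commutes with `T*T`. -/
def IsQuasinormalOp (T : H →L[ℂ] H) : Prop :=
  T ∘L (adjoint T ∘L T) = (adjoint T ∘L T) ∘L T

/-- A bounded operator on a complex Hilbert space is subnormal if it is (unitarily equivalent
to) the restriction of a normal operator to an invariant subspace. -/
def IsSubnormalOp (T : H →L[ℂ] H) : Prop :=
  ∃ (K : Type) (_ : NormedAddCommGroup K) (_ : InnerProductSpace ℂ K) (_ : CompleteSpace K),
    ∃ (V : H →ₗᵢ[ℂ] K) (N : K →L[ℂ] K), IsNormalOp N ∧ ∀ h : H, N (V h) = V (T h)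

open ContinuousLinearMap in
/-- A bounded operator is `2`-hyponormal if the operator `2×2`-matrix
`([T*ʲ, Tⁱ])_{1 ≤ i,j ≤ 2}` is positive. -/
def Is2HyponormalOp (T : H →L[ℂ] H) : Prop :=
  ∀ v : Fin 2 → H, 0 ≤
    (∑ i : Fin 2, ∑ j : Fin 2,
        (inner ℂ (v i) ((commutatorOp (adjoint T ^ ((j : ℕ) + 1)) (T ^ ((i : ℕ) + 1))) (v j)) : ℂ)).re

/-- The kernel of the self-commutator of `T` is invariant under `T`. -/
def SelfCommutatorKerInvariant (T : H →L[ℂ] H) : Prop :=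
  ∀ f : H, selfCommutator T f = 0 → selfCommutator T (T f) = 0

end OperatorTheory

/-- `H² ⊕ H²` with its Hilbert space structure. -/
abbrev H2sq := WithLp 2 (H2 × H2)

open ContinuousLinearMap in
/-- The `2 × 2` block operator `[[T₁₁, T₁₂], [T₂₁, T₂₂]]` acting on `H² ⊕ H²`. -/
def blockOp (T₁₁ T₁₂ T₂₁ T₂₂ : H2 →L[ℂ] H2) : H2sq →L[ℂ] H2sq :=
  ((WithLp.prodContinuousLinearEquiv 2 ℂ (↥H2) (↥H2)).symm :
      (↥H2 × ↥H2) →L[ℂ] H2sq) ∘L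
    (((T₁₁ ∘L fst ℂ (↥H2) (↥H2) + T₁₂ ∘L snd ℂ (↥H2) (↥H2)).prod
      (T₂₁ ∘L fst ℂ (↥H2) (↥H2) + T₂₂ ∘L snd ℂ (↥H2) (↥H2))) ∘L
    ((WithLp.prodContinuousLinearEquiv 2 ℂ (↥H2) (↥H2)) : H2sq →L[ℂ] (↥H2 × ↥H2)))

section FunctionClasses

/-- A function on the circle is in (the boundary-value space of) `H^∞`: it is essentially
bounded and its negative Fourier coefficients vanish. -/
def InHinf (ψ : 𝕋 → ℂ) : Prop :=
  MemLp ψ ∞ μh ∧ ∀ n : ℤ, n < 0 → fourierCoeff ψ n = 0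

/-- A function on the circle is in `H²`: it is square-integrable and its negative Fourier
coefficients vanish. -/
def InH2fun (ψ : 𝕋 → ℂ) : Prop :=
  MemLp ψ 2 μh ∧ ∀ n : ℤ, n < 0 → fourierCoeff ψ n = 0

/-- `φ` is of bounded type: a quotient of two `H^∞` functions. -/
def BoundedType (φ : 𝕋 → ℂ) : Prop :=
  ∃ ψ₁ ψ₂ : 𝕋 → ℂ, InHinf ψ₁ ∧ InHinf ψ₂ ∧ (∀ᵐ x ∂μh, ψ₂ x ≠ 0) ∧
    φ =ᵐ[μh] fun x => ψ₁ x / ψ₂ x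

/-- A scalar inner function: an `H^∞` function which is unimodular a.e. on the circle. -/
def ScalarInner (θ : 𝕋 → ℂ) : Prop := InHinf θ ∧ ∀ᵐ x ∂μh, ‖θ x‖ = 1

/-- A function which is a.e. constant. -/
def AEConst (f : 𝕋 → ℂ) : Prop := ∃ c : ℂ, f =ᵐ[μh] fun _ => c

/-- The boundary values of the Blaschke factor `b_λ(z) = (z − λ)/(1 − λ̄ z)`. -/
def blaschkeF (lam : ℂ) : 𝕋 → ℂ := fun x => (ζ x - lam) / (1 - (starRingEnd ℂ) lam * ζ x)

/-- A finite Blaschke product: a finite product of Blaschke factors times a unimodular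
constant. -/
def IsFiniteBlaschke (θ : 𝕋 → ℂ) : Prop :=
  ∃ (k : ℕ) (c : ℂ) (lam : Fin k → ℂ), ‖c‖ = 1 ∧ (∀ i, ‖lam i‖ < 1) ∧
    ∀ x, θ x = c * ∏ i, blaschkeF (lam i) x

/-- The value at `α ∈ 𝔻` of the analytic extension to the disc of an `H²` function on the
circle. -/
def hardyEval (φ : 𝕋 → ℂ) (α : ℂ) : ℂ := ∑' k : ℕ, fourierCoeff φ (k : ℤ) * α ^ k

/-- The (scalar) inner function `ω` divides `ψ` (in `H²`). -/
def ScalarInnerDvd (ω ψ : 𝕋 → ℂ) : Prop :=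
  ∃ g : 𝕋 → ℂ, InH2fun g ∧ ψ =ᵐ[μh] fun x => ω x * g x

/-- Two functions in `H²` are coprime: every common inner divisor is constant. -/
def ScalarCoprime (ψ₁ ψ₂ : 𝕋 → ℂ) : Prop :=
  ∀ ω : 𝕋 → ℂ, ScalarInner ω → ScalarInnerDvd ω ψ₁ → ScalarInnerDvd ω ψ₂ → AEConst ω

/-- A matrix function with all entries in `H²`. -/
def MatInH2 {n m : ℕ} (Φ : 𝕋 → Matrix (Fin n) (Fin m) ℂ) : Prop :=
  ∀ i j, InH2fun fun x => Φ x i j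

/-- A matrix function with all entries in `H^∞`. -/
def MatInHinf {n m : ℕ} (Φ : 𝕋 → Matrix (Fin n) (Fin m) ℂ) : Prop :=
  ∀ i j, InHinf fun x => Φ x i j

/-- A matrix function with all entries in `L^∞`. -/
def MatMemLinf {n m : ℕ} (Φ : 𝕋 → Matrix (Fin n) (Fin m) ℂ) : Prop :=
  ∀ i j, MemLp (fun x => Φ x i j) ∞ μh

/-- A matrix function of bounded type (all entries of bounded type). -/
def MatBoundedType {n m : ℕ} (Φ : 𝕋 → Matrix (Fin n) (Fin m) ℂ) : Prop :=
  ∀ i j, BoundedType fun x => Φ x i j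

/-- An inner matrix function: `Θ ∈ H^∞` with `Θ(z)*Θ(z) = I` a.e. -/
def MatInner {n m : ℕ} (Θ : 𝕋 → Matrix (Fin n) (Fin m) ℂ) : Prop :=
  MatInHinf Θ ∧ ∀ᵐ x ∂μh, (Θ x)ᴴ * Θ x = 1

/-- `Δ` is a left inner divisor of `Φ`: `Δ` is inner and `Φ = ΔA` for some `H²` matrix
function `A`. -/
def IsLeftInnerDiv {n m r : ℕ} (Δ : 𝕋 → Matrix (Fin n) (Fin m) ℂ)
    (Φ : 𝕋 → Matrix (Fin n) (Fin r) ℂ) : Prop :=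
  MatInner Δ ∧ ∃ A : 𝕋 → Matrix (Fin m) (Fin r) ℂ, MatInH2 A ∧ ∀ᵐ x ∂μh, Φ x = Δ x * A x

/-- Two matrix `H²` functions are left coprime: their only common left inner divisor is a
unitary (isometric) constant. -/
def LeftCoprime {n r s : ℕ} (Φ : 𝕋 → Matrix (Fin n) (Fin r) ℂ)
    (Ψ : 𝕋 → Matrix (Fin n) (Fin s) ℂ) : Prop :=
  ∀ (m : ℕ) (Δ : 𝕋 → Matrix (Fin n) (Fin m) ℂ), IsLeftInnerDiv Δ Φ → IsLeftInnerDiv Δ Ψ →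
    ∃ U : Matrix (Fin n) (Fin m) ℂ, Uᴴ * U = 1 ∧ ∀ᵐ x ∂μh, Δ x = U

/-- `Φ̃(z) := Φ(z̄)*`. -/
def mtilde {n m : ℕ} (Φ : 𝕋 → Matrix (Fin n) (Fin m) ℂ) : 𝕋 → Matrix (Fin m) (Fin n) ℂ :=
  fun x => (Φ (-x))ᴴ

/-- Two matrix `H²` functions are right coprime if their tildes are left coprime. -/
def RightCoprime {n m r : ℕ} (Φ : 𝕋 → Matrix (Fin n) (Fin r) ℂ)
    (Ψ : 𝕋 → Matrix (Fin m) (Fin r) ℂ) : Prop :=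
  LeftCoprime (mtilde Φ) (mtilde Ψ)

/-- Coprime: both left and right coprime. -/
def MatCoprime {n : ℕ} (Φ Ψ : 𝕋 → Matrix (Fin n) (Fin n) ℂ) : Prop :=
  LeftCoprime Φ Ψ ∧ RightCoprime Φ Ψ

/-- `φ = φ₋* + φ₊` with `φ₊, φ₋ ∈ H²` (scalar version). -/
def IsHardyDecomp (φ φp φm : 𝕋 → ℂ) : Prop :=
  InH2fun φp ∧ InH2fun φm ∧ φ =ᵐ[μh] fun x => (starRingEnd ℂ) (φm x) + φp x

/-- `Φ = Φ₋* + Φ₊` with `Φ₊, Φ₋ ∈ H²_{Mₙ}` (matrix version). -/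
def IsMatHardyDecomp {n : ℕ} (Φ Φp Φm : 𝕋 → Matrix (Fin n) (Fin n) ℂ) : Prop :=
  MatInH2 Φp ∧ MatInH2 Φm ∧ ∀ᵐ x ∂μh, Φ x = (Φm x)ᴴ + Φp x

/-- The family of all diagonal-constant inner functions `θ Iₙ` of which `Δ` is a left inner
divisor. -/
def diagConstFam {n : ℕ} (Δ : 𝕋 → Matrix (Fin n) (Fin n) ℂ) :
    Set (𝕋 → Matrix (Fin n) (Fin n) ℂ) :=
  {Θ | ∃ θ : 𝕋 → ℂ, ScalarInner θ ∧ Θ = (fun x => θ x • (1 : Matrix (Fin n) (Fin n) ℂ)) ∧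
    IsLeftInnerDiv Δ Θ}

/-- `G` is a greatest common left inner divisor of the family `S`. -/
def IsGCID {n : ℕ} (S : Set (𝕋 → Matrix (Fin n) (Fin n) ℂ))
    (G : 𝕋 → Matrix (Fin n) (Fin n) ℂ) : Prop :=
  MatInner G ∧ (∀ Θ ∈ S, IsLeftInnerDiv G Θ) ∧
    ∀ (m : ℕ) (G' : 𝕋 → Matrix (Fin n) (Fin m) ℂ), MatInner G' →
      (∀ Θ ∈ S, IsLeftInnerDiv G' Θ) → IsLeftInnerDiv G' G

/-- Matrix acting on a vector of `EuclideanSpace ℂ (Fin n)`. -/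
def mApply {n : ℕ} (M : Matrix (Fin n) (Fin n) ℂ) (v : EuclideanSpace ℂ (Fin n)) :
    EuclideanSpace ℂ (Fin n) :=
  (WithLp.equiv 2 (Fin n → ℂ)).symm (M.mulVec ((WithLp.equiv 2 (Fin n → ℂ)) v))

/-- The subspace `Δ H²_{ℂⁿ}` of `H²_{ℂⁿ}` (as a subset). -/
def matMulSet {n : ℕ} (Δ : 𝕋 → Matrix (Fin n) (Fin n) ℂ) : Set (H2v n) :=
  {f | ∃ g : H2v n, ((f : L2v n) : 𝕋 → EuclideanSpace ℂ (Fin n)) =ᵐ[μh]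
        fun x => mApply (Δ x) (((g : L2v n) : 𝕋 → EuclideanSpace ℂ (Fin n)) x)}

/-- A vector of polynomials, evaluated as a function on the circle. -/
def polyVecApply {n : ℕ} (p : Fin n → Polynomial ℂ) : 𝕋 → EuclideanSpace ℂ (Fin n) :=
  fun x => (WithLp.equiv 2 (Fin n → ℂ)).symm fun i => (p i).eval (ζ x)

/-- A matrix `H²` function is outer: the closure of `F · (vector polynomials)` is all of
`H²_{ℂⁿ}`. -/
def IsMatOuter {n : ℕ} (F : 𝕋 → Matrix (Fin n) (Fin n) ℂ) : Prop :=
  MatInH2 F ∧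
    (Submodule.span ℂ {g : L2v n | ∃ p : Fin n → Polynomial ℂ,
        (g : 𝕋 → EuclideanSpace ℂ (Fin n)) =ᵐ[μh]
          fun x => mApply (F x) (polyVecApply p x)}).topologicalClosure = H2v n

/-- A rational function in `L^∞` of the circle: a quotient of polynomials with no poles on
the circle. -/
def IsRationalFn (φ : 𝕋 → ℂ) : Prop :=
  ∃ p q : Polynomial ℂ, (∀ z : ℂ, ‖z‖ = 1 → q.eval z ≠ 0) ∧
    φ =ᵐ[μh] fun x => Polynomial.eval (ζ x) p / Polynomial.eval (ζ x) q

/-- `φ` is a rational function (no poles on the circle) with exactly `m` poles on the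
Riemann sphere, counted with multiplicity. -/
def RationalPoleCount (φ : 𝕋 → ℂ) (m : ℕ) : Prop :=
  ∃ p q : Polynomial ℂ, IsCoprime p q ∧ q ≠ 0 ∧ (∀ z : ℂ, ‖z‖ = 1 → q.eval z ≠ 0) ∧
    φ =ᵐ[μh] (fun x => Polynomial.eval (ζ x) p / Polynomial.eval (ζ x) q) ∧
    max p.natDegree q.natDegree = m

/-- Entrywise evaluation at `z ∈ 𝔻` of the analytic extension of a matrix `H²` function. -/
def matHardyEval {n m : ℕ} (A : 𝕋 → Matrix (Fin n) (Fin m) ℂ) (z : ℂ) :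
    Matrix (Fin n) (Fin m) ℂ :=
  Matrix.of fun i j => hardyEval (fun x => A x i j) z

end FunctionClasses

end Paper
namespace Paper

/-! With the self-adjoint unitary `W = 2^{-1/2} [[1, 1], [1, -1]]` on `E ⊕ E`, every block operator
`[[a, b], [b, a]]` equals `W (a + b ⊕ a - b) W`; for `A` this is `W (2(U + U*) ⊕ (-2U)) W`.
The first summand is self-adjoint and the second a multiple of an isometry, so both are
quasinormal, hence so is `A`. As `-2U` is the restriction of the normal operator `-2M_z` on `L²`,
`A` is the restriction of the normal operator `2(U + U*) ⊕ (-2M_z)` on `H² ⊕ L²` along the isometry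
`(1 ⊕ ι) W`, where `ι : H² → L²` is the inclusion. Finally `A` is not normal because `U` is not:
`U* 1 = 0`. -/

open ContinuousLinearMap

@[ext]
lemma withLp_prod_ext {p : ℝ≥0∞} {α β : Type*} {x y : WithLp p (α × β)} (h₁ : x.fst = y.fst)
    (h₂ : x.snd = y.snd) : x = y :=
  (WithLp.ext_iff p).2 (Prod.ext h₁ h₂)

section BlockOperators

variable {𝕜 : Type*} [RCLike 𝕜] {E₁ E₂ F₁ F₂ G₁ G₂ : Type*}
  [NormedAddCommGroup E₁] [InnerProductSpace 𝕜 E₁] [NormedAddCommGroup E₂] [InnerProductSpace 𝕜 E₂]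
  [NormedAddCommGroup F₁] [InnerProductSpace 𝕜 F₁] [NormedAddCommGroup F₂] [InnerProductSpace 𝕜 F₂]
  [NormedAddCommGroup G₁] [InnerProductSpace 𝕜 G₁] [NormedAddCommGroup G₂] [InnerProductSpace 𝕜 G₂]

def blockCLM (A : E₁ →L[𝕜] F₁) (B : E₂ →L[𝕜] F₁) (C : E₁ →L[𝕜] F₂) (D : E₂ →L[𝕜] F₂) :
    WithLp 2 (E₁ × E₂) →L[𝕜] WithLp 2 (F₁ × F₂) :=
  ((WithLp.prodContinuousLinearEquiv 2 𝕜 F₁ F₂).symm : F₁ × F₂ →L[𝕜] WithLp 2 (F₁ × F₂)) ∘L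
    ((A ∘L fst 𝕜 E₁ E₂ + B ∘L snd 𝕜 E₁ E₂).prod (C ∘L fst 𝕜 E₁ E₂ + D ∘L snd 𝕜 E₁ E₂)) ∘L
    (WithLp.prodContinuousLinearEquiv 2 𝕜 E₁ E₂ : WithLp 2 (E₁ × E₂) →L[𝕜] E₁ × E₂)

variable (A : E₁ →L[𝕜] F₁) (B : E₂ →L[𝕜] F₁) (C : E₁ →L[𝕜] F₂) (D : E₂ →L[𝕜] F₂)

@[simp]
lemma blockCLM_apply_fst (x : WithLp 2 (E₁ × E₂)) :
    (blockCLM A B C D x).fst = A x.fst + B x.snd := rfl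

@[simp]
lemma blockCLM_apply_snd (x : WithLp 2 (E₁ × E₂)) :
    (blockCLM A B C D x).snd = C x.fst + D x.snd := rfl

lemma blockCLM_comp (A' : F₁ →L[𝕜] G₁) (B' : F₂ →L[𝕜] G₁) (C' : F₁ →L[𝕜] G₂)
    (D' : F₂ →L[𝕜] G₂) :
    blockCLM A' B' C' D' ∘L blockCLM A B C D =
      blockCLM (A' ∘L A + B' ∘L C) (A' ∘L B + B' ∘L D) (C' ∘L A + D' ∘L C)
        (C' ∘L B + D' ∘L D) := by
  ext x <;>
    simp only [ContinuousLinearMap.comp_apply, blockCLM_apply_fst, blockCLM_apply_snd,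
      _root_.add_apply, map_add] <;>
    abel

lemma blockCLM_inj {A' : E₁ →L[𝕜] F₁} {B' : E₂ →L[𝕜] F₁} {C' : E₁ →L[𝕜] F₂}
    {D' : E₂ →L[𝕜] F₂} :
    blockCLM A B C D = blockCLM A' B' C' D' ↔ A = A' ∧ B = B' ∧ C = C' ∧ D = D' := by
  refine ⟨fun h => ?_, by rintro ⟨rfl, rfl, rfl, rfl⟩; rfl⟩
  have h₁ (x : E₁) := congr($h (WithLp.toLp 2 (x, 0)))
  have h₂ (y : E₂) := congr($h (WithLp.toLp 2 (0, y)))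
  refine ⟨ext fun x => ?_, ext fun y => ?_, ext fun x => ?_, ext fun y => ?_⟩
  · simpa using congr(($(h₁ x)).fst)
  · simpa using congr(($(h₂ y)).fst)
  · simpa using congr(($(h₁ x)).snd)
  · simpa using congr(($(h₂ y)).snd)

lemma blockCLM_id :
    blockCLM (.id 𝕜 E₁) 0 0 (.id 𝕜 E₂) = ContinuousLinearMap.id 𝕜 (WithLp 2 (E₁ × E₂)) := by
  ext x <;> simp

variable [CompleteSpace E₁] [CompleteSpace E₂] [CompleteSpace F₁] [CompleteSpace F₂]

lemma adjoint_blockCLM :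
    adjoint (blockCLM A B C D) = blockCLM (adjoint A) (adjoint C) (adjoint B) (adjoint D) := by
  symm
  refine (eq_adjoint_iff _ _).2 fun x y => ?_
  simp only [WithLp.prod_inner_apply, WithLp.ofLp_fst, WithLp.ofLp_snd, blockCLM_apply_fst,
    blockCLM_apply_snd, inner_add_left, inner_add_right, adjoint_inner_left]
  ring

end BlockOperators

section Hadamard

variable {𝕜 : Type*} [RCLike 𝕜] {E : Type*} [NormedAddCommGroup E] [InnerProductSpace 𝕜 E]

lemma inv_sqrt_two_mul_self : ((√2 : ℝ) : 𝕜)⁻¹ * ((√2 : ℝ) : 𝕜)⁻¹ = 2⁻¹ := by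
  rw [← mul_inv, ← RCLike.ofReal_mul, Real.mul_self_sqrt zero_le_two, RCLike.ofReal_ofNat]

def hadamard (𝕜 : Type*) [RCLike 𝕜] {E : Type*} [NormedAddCommGroup E] [InnerProductSpace 𝕜 E] :
    WithLp 2 (E × E) →L[𝕜] WithLp 2 (E × E) :=
  ((√2 : ℝ) : 𝕜)⁻¹ • blockCLM 1 1 1 (-1)

lemma hadamard_apply_fst (x : WithLp 2 (E × E)) :
    (hadamard 𝕜 x).fst = ((√2 : ℝ) : 𝕜)⁻¹ • (x.fst + x.snd) := rfl

lemma hadamard_apply_snd (x : WithLp 2 (E × E)) :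
    (hadamard 𝕜 x).snd = ((√2 : ℝ) : 𝕜)⁻¹ • (x.fst - x.snd) := by
  simp [hadamard, sub_eq_add_neg]

lemma hadamard_comp_hadamard : (hadamard 𝕜 : WithLp 2 (E × E) →L[𝕜] _) ∘L hadamard 𝕜 = 1 := by
  ext x
  all_goals simp only [ContinuousLinearMap.comp_apply, hadamard_apply_fst, hadamard_apply_snd,
    one_apply_eq_self]
  · linear_combination (norm := module) (2 : 𝕜) • inv_sqrt_two_mul_self (𝕜 := 𝕜) • x.fst
  · linear_combination (norm := module) (2 : 𝕜) • inv_sqrt_two_mul_self (𝕜 := 𝕜) • x.snd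

lemma blockCLM_eq_hadamard_conj (a b : E →L[𝕜] E) :
    blockCLM a b b a = hadamard 𝕜 ∘L blockCLM (a + b) 0 0 (a - b) ∘L hadamard 𝕜 := by
  ext x
  all_goals simp only [ContinuousLinearMap.comp_apply, hadamard_apply_fst, hadamard_apply_snd,
    blockCLM_apply_fst, blockCLM_apply_snd, map_smul, map_add, map_sub, _root_.add_apply,
    _root_.sub_apply, _root_.zero_apply, add_zero]
  · linear_combination (norm := module)
      (-2 : 𝕜) • inv_sqrt_two_mul_self (𝕜 := 𝕜) • (a x.fst + b x.snd)
  · linear_combination (norm := module)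
      (-2 : 𝕜) • inv_sqrt_two_mul_self (𝕜 := 𝕜) • (b x.fst + a x.snd)

variable [CompleteSpace E]

lemma adjoint_hadamard : adjoint (hadamard 𝕜 : WithLp 2 (E × E) →L[𝕜] _) = hadamard 𝕜 := by
  symm
  refine (eq_adjoint_iff _ _).2 fun x y => ?_
  simp only [WithLp.prod_inner_apply, WithLp.ofLp_fst, WithLp.ofLp_snd, hadamard_apply_fst,
    hadamard_apply_snd, inner_smul_left, inner_smul_right, inner_add_left, inner_add_right,
    inner_sub_left, inner_sub_right, map_inv₀, RCLike.conj_ofReal]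
  ring

lemma hadamard_mem_unitary :
    (hadamard 𝕜 : WithLp 2 (E × E) →L[𝕜] _) ∈ unitary (WithLp 2 (E × E) →L[𝕜] _) := by
  rw [Unitary.mem_iff, star_eq_adjoint, adjoint_hadamard, and_self]
  exact hadamard_comp_hadamard

end Hadamard

section OperatorClasses

variable {H K : Type} [NormedAddCommGroup H] [InnerProductSpace ℂ H] [CompleteSpace H]
  [NormedAddCommGroup K] [InnerProductSpace ℂ K] [CompleteSpace K]

lemma isNormalOp_iff_isStarNormal {T : H →L[ℂ] H} : IsNormalOp T ↔ IsStarNormal T :=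
  ⟨fun h => ⟨h⟩, fun h => h.star_comm_self⟩

lemma isQuasinormalOp_iff_commute {T : H →L[ℂ] H} :
    IsQuasinormalOp T ↔ Commute T (star T * T) :=
  Iff.rfl

lemma IsNormalOp.isQuasinormalOp {T : H →L[ℂ] H} (hT : IsNormalOp T) : IsQuasinormalOp T :=
  isQuasinormalOp_iff_commute.2 ((show Commute (star T) T from hT).symm.mul_right (Commute.refl T))

lemma IsQuasinormalOp.smul {T : H →L[ℂ] H} (hT : IsQuasinormalOp T) (c : ℂ) :
    IsQuasinormalOp (c • T) := by
  rw [isQuasinormalOp_iff_commute] at hT ⊢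
  rw [star_smul, smul_mul_smul_comm]
  exact (hT.smul_left c).smul_right _

lemma isQuasinormalOp_of_adjoint_comp_self {T : H →L[ℂ] H} (hT : adjoint T ∘L T = 1) :
    IsQuasinormalOp T := by
  rw [IsQuasinormalOp, hT]
  rfl

lemma IsQuasinormalOp.conj_unitary {T W : H →L[ℂ] H} (hT : IsQuasinormalOp T)
    (hW : W ∈ unitary (H →L[ℂ] H)) : IsQuasinormalOp (W ∘L T ∘L adjoint W) := by
  rw [isQuasinormalOp_iff_commute] at hT ⊢
  have h := hT.map (Unitary.conjStarAlgAut ℂ (H →L[ℂ] H) ⟨W, hW⟩)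
  rw [map_mul, map_star, Unitary.conjStarAlgAut_apply] at h
  exact h

lemma isNormalOp_conj_unitary_iff {T W : H →L[ℂ] H} (hW : W ∈ unitary (H →L[ℂ] H)) :
    IsNormalOp (W ∘L T ∘L adjoint W) ↔ IsNormalOp T := by
  rw [isNormalOp_iff_isStarNormal, isNormalOp_iff_isStarNormal]
  let σ := Unitary.conjStarAlgAut ℂ (H →L[ℂ] H) ⟨W, hW⟩
  refine ⟨fun h => ?_, fun h => IsStarNormal.map σ T⟩
  have h' : IsStarNormal (σ.symm (σ T)) := IsStarNormal.map σ.symm (σ T) (hr := h)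
  rwa [StarAlgEquiv.symm_apply_apply] at h'

lemma isQuasinormalOp_blockCLM_diag {S : H →L[ℂ] H} {T : K →L[ℂ] K} (hS : IsQuasinormalOp S)
    (hT : IsQuasinormalOp T) : IsQuasinormalOp (blockCLM S 0 0 T) := by
  unfold IsQuasinormalOp at *
  simp only [adjoint_blockCLM, blockCLM_comp, comp_zero, zero_comp, add_zero, zero_add, hS, hT,
    map_zero]

lemma isNormalOp_blockCLM_diag_iff {S : H →L[ℂ] H} {T : K →L[ℂ] K} :
    IsNormalOp (blockCLM S 0 0 T) ↔ IsNormalOp S ∧ IsNormalOp T := by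
  unfold IsNormalOp
  simp only [adjoint_blockCLM, blockCLM_comp, comp_zero, zero_comp, add_zero, zero_add, map_zero,
    blockCLM_inj]
  tauto

lemma isSubnormalOp_of_comp_eq {T : H →L[ℂ] H} (V : H →L[ℂ] K) (hV : adjoint V ∘L V = 1)
    {N : K →L[ℂ] K} (hN : IsNormalOp N) (h : N ∘L V = V ∘L T) : IsSubnormalOp T :=
  ⟨K, inferInstance, inferInstance, inferInstance,
    { toLinearMap := V, norm_map' := (norm_map_iff_adjoint_comp_self V).2 hV }, N, hN,
    fun x => congr($h x)⟩

lemma not_isNormalOp_of_adjoint_apply_eq_zero {T : H →L[ℂ] H} (hT : adjoint T ∘L T = 1) {f : H}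
    (hf : adjoint T f = 0) (hf₀ : f ≠ 0) : ¬ IsNormalOp T := by
  intro hN
  apply hf₀
  simpa [hT, hf] using congr($hN f)

end OperatorClasses

section MultiplicationOperators

variable {E : Type} [NormedAddCommGroup E] [InnerProductSpace ℂ E] [CompleteSpace E]

lemma adjoint_smulCLM {φ : 𝕋 → ℂ} (hm : AEStronglyMeasurable φ μh)
    (hb : ∃ C : ℝ, ∀ᵐ x ∂μh, ‖φ x‖ ≤ C) :
    adjoint (smulCLM (E := E) φ) = smulCLM fun x => conj (φ x) := by
  have hm' : AEStronglyMeasurable (fun x => conj (φ x)) μh := hm.star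
  have hb' : ∃ C : ℝ, ∀ᵐ x ∂μh, ‖conj (φ x)‖ ≤ C := by simpa only [RCLike.norm_conj] using hb
  symm
  refine (eq_adjoint_iff _ _).2 fun f g => ?_
  rw [L2.inner_def, L2.inner_def]
  refine integral_congr_ae ?_
  filter_upwards [smulCLM_coeFn _ hm' hb' f, smulCLM_coeFn _ hm hb g] with x hf hg
  rw [hf, hg, inner_smul_left, inner_smul_right, Complex.conj_conj]

lemma smulCLM_mem_unitary {φ : 𝕋 → ℂ} (hm : AEStronglyMeasurable φ μh)
    (hφ : ∀ᵐ x ∂μh, ‖φ x‖ = 1) : smulCLM (E := E) φ ∈ unitary (Lp E 2 μh →L[ℂ] Lp E 2 μh) := by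
  have hb : ∃ C : ℝ, ∀ᵐ x ∂μh, ‖φ x‖ ≤ C := ⟨1, hφ.mono fun _ hx => hx.le⟩
  have hm' : AEStronglyMeasurable (fun x => conj (φ x)) μh := hm.star
  have hb' : ∃ C : ℝ, ∀ᵐ x ∂μh, ‖conj (φ x)‖ ≤ C := by simpa only [RCLike.norm_conj] using hb
  rw [Unitary.mem_iff, star_eq_adjoint, adjoint_smulCLM hm hb]
  constructor <;> refine ContinuousLinearMap.ext fun f => Lp.ext ?_
  · filter_upwards [smulCLM_coeFn _ hm' hb' (smulCLM φ f), smulCLM_coeFn _ hm hb f, hφ]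
      with x h₁ h₂ h₃
    rw [mul_apply_eq_comp, one_apply_eq_self, h₁, h₂, smul_smul, Complex.conj_mul', h₃]
    simp
  · filter_upwards [smulCLM_coeFn _ hm hb (smulCLM (fun x => conj (φ x)) f),
      smulCLM_coeFn _ hm' hb' f, hφ] with x h₁ h₂ h₃
    rw [mul_apply_eq_comp, one_apply_eq_self, h₁, h₂, smul_smul, Complex.mul_conj', h₃]
    simp

end MultiplicationOperators

section HardySpace

lemma ζ_eq_fourier (x : 𝕋) : ζ x = fourier 1 x := by
  rw [fourier_apply, one_zsmul]
  rfl

lemma norm_ζ (x : 𝕋) : ‖ζ x‖ = 1 := by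
  simp [ζ, Circle.norm_coe]

lemma continuous_ζ : Continuous ζ :=
  continuous_subtype_val.comp AddCircle.continuous_toCircle

def bilateralShift : L2 →L[ℂ] L2 := smulCLM ζ

lemma bilateralShift_mem_unitary : bilateralShift ∈ unitary (L2 →L[ℂ] L2) :=
  smulCLM_mem_unitary continuous_ζ.aestronglyMeasurable (ae_of_all _ norm_ζ)

lemma bilateralShift_fourierLp (n : ℤ) : bilateralShift (fourierLp 2 n) = fourierLp 2 (n + 1) := by
  refine Lp.ext ?_
  filter_upwards [smulCLM_coeFn ζ continuous_ζ.aestronglyMeasurable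
    ⟨1, ae_of_all _ (norm_ζ · |>.le)⟩ (fourierLp 2 n), coeFn_fourierLp 2 n,
    coeFn_fourierLp 2 (n + 1)] with x h₁ h₂ h₃
  rw [bilateralShift, h₁, h₂, h₃, add_comm, fourier_add, ζ_eq_fourier, smul_eq_mul]

lemma adjoint_bilateralShift_fourierLp (n : ℤ) :
    adjoint bilateralShift (fourierLp 2 n) = fourierLp 2 (n - 1) := by
  conv_lhs => rw [← sub_add_cancel n 1, ← bilateralShift_fourierLp]
  rw [← mul_apply_eq_comp, ← star_eq_adjoint,
    Unitary.star_mul_self_of_mem bilateralShift_mem_unitary, one_apply_eq_self]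

lemma H2_le_of_fourierLp_mem {p : Submodule ℂ L2} (hp : IsClosed (p : Set L2))
    (h : ∀ n : ℕ, fourierLp 2 (n : ℤ) ∈ p) : H2 ≤ p :=
  Submodule.topologicalClosure_minimal _ (Submodule.span_le.2 (Set.range_subset_iff.2 h)) hp

lemma fourierLp_mem_H2 (n : ℕ) : fourierLp 2 (n : ℤ) ∈ H2 :=
  Submodule.le_topologicalClosure _ (Submodule.subset_span ⟨n, rfl⟩)

lemma bilateralShift_mem_H2 {f : L2} (hf : f ∈ H2) : bilateralShift f ∈ H2 := by
  refine H2_le_of_fourierLp_mem (p := H2.comap (bilateralShift : L2 →ₗ[ℂ] L2))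
    ((Submodule.isClosed_topologicalClosure _).preimage bilateralShift.continuous) (fun n => ?_) hf
  rw [Submodule.mem_comap, ContinuousLinearMap.coe_coe, bilateralShift_fourierLp]
  exact_mod_cast fourierLp_mem_H2 (n + 1)

lemma inner_fourierLp_neg_one_eq_zero {g : L2} (hg : g ∈ H2) :
    inner ℂ (fourierLp 2 (-1) : L2) g = 0 := by
  refine H2_le_of_fourierLp_mem (p := (innerSL ℂ (fourierLp 2 (-1) : L2) : L2 →ₗ[ℂ] ℂ).ker)
    (ContinuousLinearMap.isClosed_ker _) (fun n => ?_) hg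
  exact orthonormal_fourier.2 (by omega)

end HardySpace

section UnilateralShift

lemma coe_toeplitz_ζ (f : H2) : (toeplitz ζ f : L2) = bilateralShift f :=
  Submodule.starProjection_eq_self_iff.mpr (bilateralShift_mem_H2 f.2)

lemma bilateralShift_comp_subtypeL : bilateralShift ∘L H2.subtypeL = H2.subtypeL ∘L toeplitz ζ :=
  ContinuousLinearMap.ext fun f => (coe_toeplitz_ζ f).symm

lemma adjoint_toeplitz_ζ_comp_self : adjoint (toeplitz ζ) ∘L toeplitz ζ = 1 :=
  (norm_map_iff_adjoint_comp_self _).1 fun f => by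
    have h := norm_map_of_mem_unitary bilateralShift_mem_unitary (f : L2)
    rwa [← coe_toeplitz_ζ] at h

def fourierH2 (n : ℕ) : H2 := ⟨fourierLp 2 n, fourierLp_mem_H2 n⟩

lemma coe_fourierH2 (n : ℕ) : (fourierH2 n : L2) = fourierLp 2 n := rfl

lemma fourierH2_ne_zero (n : ℕ) : fourierH2 n ≠ 0 :=
  ne_zero_of_norm_ne_zero <| (orthonormal_fourier.1 (n : ℤ)).trans_ne one_ne_zero

lemma adjoint_toeplitz_ζ_fourierH2_zero : adjoint (toeplitz ζ) (fourierH2 0) = 0 := by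
  refine ext_inner_right ℂ fun g => ?_
  rw [adjoint_inner_left, Submodule.coe_inner, coe_toeplitz_ζ, ← adjoint_inner_left, coe_fourierH2,
    Nat.cast_zero, adjoint_bilateralShift_fourierLp, zero_sub, inner_zero_left]
  exact inner_fourierLp_neg_one_eq_zero g.2

end UnilateralShift

section Completion

variable {E L : Type} [NormedAddCommGroup E] [InnerProductSpace ℂ E] [CompleteSpace E]
  [NormedAddCommGroup L] [InnerProductSpace ℂ L] [CompleteSpace L]

def completionOp (u : E →L[ℂ] E) : WithLp 2 (E × E) →L[ℂ] WithLp 2 (E × E) :=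
  blockCLM (adjoint u) (adjoint u + (2 : ℂ) • u) (adjoint u + (2 : ℂ) • u) (adjoint u)

lemma completionOp_eq_hadamard_conj (u : E →L[ℂ] E) :
    completionOp u = hadamard ℂ ∘L blockCLM ((2 : ℂ) • (u + adjoint u)) 0 0 ((-2 : ℂ) • u) ∘L
      adjoint (hadamard ℂ) := by
  rw [completionOp, blockCLM_eq_hadamard_conj, adjoint_hadamard]
  congr 3 <;> module

lemma isNormalOp_two_smul_add_adjoint (u : E →L[ℂ] E) : IsNormalOp ((2 : ℂ) • (u + adjoint u)) :=
  have := (IsSelfAdjoint.add_star_self u).isStarNormal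
  isNormalOp_iff_isStarNormal.2 inferInstance

lemma isQuasinormalOp_completionOp {u : E →L[ℂ] E} (hu : adjoint u ∘L u = 1) :
    IsQuasinormalOp (completionOp u) := by
  have hD := isQuasinormalOp_blockCLM_diag (isNormalOp_two_smul_add_adjoint u).isQuasinormalOp
    ((isQuasinormalOp_of_adjoint_comp_self hu).smul (-2))
  rw [completionOp_eq_hadamard_conj]
  exact hD.conj_unitary hadamard_mem_unitary

lemma not_isNormalOp_completionOp {u : E →L[ℂ] E} (hu : adjoint u ∘L u = 1) {f : E}
    (hf : adjoint u f = 0) (hf₀ : f ≠ 0) : ¬ IsNormalOp (completionOp u) := by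
  rw [completionOp_eq_hadamard_conj, isNormalOp_conj_unitary_iff hadamard_mem_unitary,
    isNormalOp_blockCLM_diag_iff]
  rintro ⟨-, hnormal⟩
  have : IsStarNormal u := by
    simpa [smul_smul] using
      IsStarNormal.smul (-2⁻¹ : ℂ) _ (ha := isNormalOp_iff_isStarNormal.1 hnormal)
  exact not_isNormalOp_of_adjoint_apply_eq_zero hu hf hf₀ this.star_comm_self

lemma isSubnormalOp_completionOp (u : E →L[ℂ] E) (ι : E →L[ℂ] L) (hι : adjoint ι ∘L ι = 1)
    {m : L →L[ℂ] L} (hm : IsNormalOp m) (h : m ∘L ι = ι ∘L u) : IsSubnormalOp (completionOp u) := by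
  let V : WithLp 2 (E × E) →L[ℂ] WithLp 2 (E × L) := blockCLM 1 0 0 ι ∘L hadamard ℂ
  let N : WithLp 2 (E × L) →L[ℂ] WithLp 2 (E × L) :=
    blockCLM ((2 : ℂ) • (u + adjoint u)) 0 0 ((-2 : ℂ) • m)
  have hV : adjoint V ∘L V = 1 := by
    simp only [V, adjoint_comp, adjoint_hadamard, adjoint_blockCLM]
    rw [comp_assoc, ← comp_assoc _ _ (hadamard ℂ), blockCLM_comp]
    simp only [adjoint_one, map_zero, comp_zero, zero_comp, add_zero, zero_add, hι]
    simp only [one_def, id_comp, blockCLM_id]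
    exact hadamard_comp_hadamard
  refine isSubnormalOp_of_comp_eq V hV (N := N) ?_ ?_
  · have := isNormalOp_iff_isStarNormal.1 hm
    exact isNormalOp_blockCLM_diag_iff.2
      ⟨isNormalOp_two_smul_add_adjoint u, isNormalOp_iff_isStarNormal.2 inferInstance⟩
  have hNB : N ∘L blockCLM 1 0 0 ι =
      blockCLM 1 0 0 ι ∘L blockCLM ((2 : ℂ) • (u + adjoint u)) 0 0 ((-2 : ℂ) • u) := by
    simp only [N, blockCLM_comp, comp_zero, zero_comp, add_zero, zero_add, smul_comp, comp_smul,
      smul_zero, h, one_def, comp_id, id_comp]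
  calc N ∘L V = (N ∘L blockCLM 1 0 0 ι) ∘L hadamard ℂ := rfl
    _ = V ∘L completionOp u := by
      rw [hNB, completionOp_eq_hadamard_conj, adjoint_hadamard]
      simp only [V, comp_assoc]
      rw [← comp_assoc (hadamard ℂ) (hadamard ℂ), hadamard_comp_hadamard]
      simp only [one_def, id_comp]

end Completion

open ContinuousLinearMap in
/-- **Corollary 4.3**: with `U = T_z` the unilateral shift on `H²`, the block operator
`A = [[U*, U* + 2U], [U* + 2U, U*]]` on `H² ⊕ H²` is quasinormal (hence subnormal), and
it is not normal.  In particular, `A` is a subnormal (non-normal) Toeplitz completion of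
the partial block Toeplitz matrix `[[U*, ?], [?, U*]]`. -/
theorem quasinormal_completion :
    ∀ U A, U = toeplitz (fun x => ζ x) →
      A = blockOp (adjoint U) (adjoint U + (2 : ℂ) • U)
            (adjoint U + (2 : ℂ) • U) (adjoint U) →
    IsQuasinormalOp A ∧ IsSubnormalOp A ∧ ¬ IsNormalOp A := by
  rintro U A rfl rfl
  refine ⟨isQuasinormalOp_completionOp adjoint_toeplitz_ζ_comp_self, ?_,
    not_isNormalOp_completionOp adjoint_toeplitz_ζ_comp_self adjoint_toeplitz_ζ_fourierH2_zero
      (fourierH2_ne_zero 0)⟩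
  exact isSubnormalOp_completionOp _ H2.subtypeL
    ((norm_map_iff_adjoint_comp_self _).1 fun _ => rfl)
    (isNormalOp_iff_isStarNormal.2 (isStarNormal_of_mem_unitary bilateralShift_mem_unitary))
    bilateralShift_comp_subtypeL

end Paper
end
end

section
/- Let A ∈ H²_{M_n} and let Θ = diag(θ₁, …, θ_n) be a diagonal inner matrix function all of whose diagonal entries θ_j are nonconstant scalar inner functions. If Af = 0 for every f in the model space H_Θ := H²_{C^n} ⊖ ΘH²_{C^n}, then A = 0. -/
noncomputable section
open MeasureTheory Complex Filter Matrix
open scoped ENNReal ComplexConjugate Real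

/-! For each column `j` the vector function `e_j k_j`, with `k_j = 1 - conj(θ_j(0)) θ_j`, lies in
`H_Θ`: its inner product with `Θ g` is the mean of `(θ_j - θ_j(0)) g_j`, which vanishes because
both factors lie in `H²` and the first one vanishes at the origin. Hence `A e_j k_j = 0`, i.e. the
`j`-th column of `A` times `k_j` vanishes a.e. As `θ_j` is unimodular and nonconstant,
`|θ_j(0)| < 1` (equality in Cauchy–Schwarz against `1` would make `θ_j` constant), so `k_j` has
no zeros on the circle and the column vanishes. -/

namespace Paper

local notation "⟪" x ", " y "⟫" => @inner ℂ _ _ x y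

lemma topologicalClosure_span_le_comap {𝕜 X Y : Type*} [NormedField 𝕜]
    [NormedAddCommGroup X] [NormedSpace 𝕜 X] [NormedAddCommGroup Y] [NormedSpace 𝕜 Y]
    (L : X →L[𝕜] Y) {S : Set X} {K : Submodule 𝕜 Y} (hK : IsClosed (K : Set Y))
    (hS : ∀ s ∈ S, L s ∈ K) :
    (Submodule.span 𝕜 S).topologicalClosure ≤ K.comap (L : X →ₗ[𝕜] Y) :=
  Submodule.topologicalClosure_minimal _ (Submodule.span_le.2 hS) (hK.preimage L.continuous)

section Fourier

variable {T : ℝ} [Fact (0 < T)] {E : Type*} [NormedAddCommGroup E] [NormedSpace ℂ E]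

lemma fourierCoeff_const [CompleteSpace E] (c : E) (m : ℤ) :
    fourierCoeff (fun _ : AddCircle T => c) m = if m = 0 then c else 0 := by
  have h := congrFun (fourierCoeff_fourier (T := T) 0) m
  simp only [fourierCoeff, fourier_zero, smul_eq_mul, mul_one] at h
  rw [fourierCoeff, integral_smul_const, h]
  split_ifs with hm <;> simp [hm]

lemma fourierCoeff_sub {f g : AddCircle T → E} (hf : Integrable f AddCircle.haarAddCircle)
    (hg : Integrable g AddCircle.haarAddCircle) (m : ℤ) :
    fourierCoeff (fun x => f x - g x) m = fourierCoeff f m - fourierCoeff g m := by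
  simpa [fourierCoeff, smul_sub] using integral_sub (hf.fourier_smul (-m)) (hg.fourier_smul (-m))

end Fourier

lemma ScalarInner.inH2fun {θ : 𝕋 → ℂ} (hθ : ScalarInner θ) : InH2fun θ :=
  ⟨hθ.1.1.mono_exponent le_top, hθ.1.2⟩

lemma InH2fun.toLp_mem_H2 {w : 𝕋 → ℂ} (hw : InH2fun w) : hw.1.toLp w ∈ H2 := by
  refine (Submodule.isClosed_topologicalClosure _).mem_of_tendsto
    (fourierBasis.hasSum_repr (hw.1.toLp w))
    (Eventually.of_forall fun s => Submodule.sum_mem _ fun m _ => ?_)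
  rcases lt_or_ge m 0 with hm | hm
  · rw [fourierBasis_repr, fourierCoeff_congr_ae hw.1.coeFn_toLp, hw.2 m hm, zero_smul]
    exact Submodule.zero_mem _
  · lift m to ℕ using hm
    rw [coe_fourierBasis]
    exact Submodule.smul_mem _ _
      (Submodule.le_topologicalClosure _ (Submodule.subset_span ⟨m, rfl⟩))

lemma InH2fun.integral_sub_fourierCoeff_zero_mul_eq_zero {θ : 𝕋 → ℂ} (hθ : InH2fun θ)
    {w : L2} (hw : w ∈ H2) : ∫ x, (θ x - fourierCoeff θ 0) * w x ∂μh = 0 := by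
  set a := fourierCoeff θ 0
  have hψ : MemLp (star fun x => θ x - a) 2 μh := (hθ.1.sub (memLp_const a)).star
  have hinner : ∀ v : L2, ⟪hψ.toLp _, v⟫ = ∫ x, (θ x - a) * v x ∂μh := fun v => by
    rw [L2.inner_def]
    refine integral_congr_ae ?_
    filter_upwards [hψ.coeFn_toLp] with x hx
    simp [hx, RCLike.inner_apply, mul_comm]
  rw [← hinner]
  have hH2 : H2 ≤ (⊥ : Submodule ℂ ℂ).comap (innerSL ℂ (hψ.toLp _) : L2 →ₗ[ℂ] ℂ) := by
    refine topologicalClosure_span_le_comap _ isClosed_singleton ?_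
    rintro _ ⟨m, rfl⟩
    have hcoeff : ∫ x, (θ x - a) * fourierLp 2 (m : ℤ) x ∂μh
        = fourierCoeff (fun x => θ x - a) (-m) := by
      refine integral_congr_ae ?_
      filter_upwards [coeFn_fourierLp (T := 2 * Real.pi) 2 (m : ℤ)] with x hx
      rw [hx, neg_neg, smul_eq_mul, mul_comm]
    rw [fourierCoeff_sub (hθ.1.integrable one_le_two) (integrable_const a),
      fourierCoeff_const] at hcoeff
    rw [Submodule.mem_bot, innerSL_apply_apply, hinner, hcoeff]
    rcases Nat.eq_zero_or_pos m with rfl | hm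
    · simp [a]
    · have hneg : -(m : ℤ) < 0 := by omega
      rw [hθ.2 _ hneg, if_neg hneg.ne, sub_zero]
  simpa using hH2 hw

section Components

variable {n : ℕ}

def singleLp (j : Fin n) : L2 →L[ℂ] L2v n :=
  (ContinuousLinearMap.toSpanSingleton ℂ (EuclideanSpace.single j (1 : ℂ))).compLpL 2 μh

def projLp (j : Fin n) : L2v n →L[ℂ] L2 :=
  (EuclideanSpace.proj (𝕜 := ℂ) j).compLpL 2 μh

lemma coeFn_singleLp (j : Fin n) (h : L2) :
    (singleLp j h : 𝕋 → EuclideanSpace ℂ (Fin n)) =ᵐ[μh]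
      fun x => EuclideanSpace.single j (h x) := by
  filter_upwards [ContinuousLinearMap.coeFn_compLpL
    (ContinuousLinearMap.toSpanSingleton ℂ (EuclideanSpace.single j (1 : ℂ))) h] with x hx
  ext i
  simp [singleLp, hx, PiLp.single_apply]

lemma coeFn_projLp (j : Fin n) (g : L2v n) : (projLp j g : 𝕋 → ℂ) =ᵐ[μh] fun x => g x j :=
  ContinuousLinearMap.coeFn_compLpL _ g

lemma projLp_singleLp (i j : Fin n) (h : L2) :
    projLp i (singleLp j h) = if i = j then h else 0 := by
  refine Lp.ext ?_
  filter_upwards [coeFn_projLp i (singleLp j h), coeFn_singleLp j h,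
    Lp.coeFn_zero ℂ 2 μh] with x h1 h2 h3
  split_ifs with hij
  · rw [h1, h2, hij, PiLp.single_apply, if_pos rfl]
  · rw [h1, h2, h3, PiLp.single_apply, if_neg hij, Pi.zero_apply]

lemma singleLp_mem_H2v (j : Fin n) {h : L2} (hh : h ∈ H2) : singleLp j h ∈ H2v n :=
  topologicalClosure_span_le_comap _ (Submodule.isClosed_topologicalClosure _)
    (by
      rintro _ ⟨m, rfl⟩
      exact Submodule.le_topologicalClosure _ (Submodule.subset_span ⟨(m, j), rfl⟩)) hh

lemma projLp_mem_H2 (j : Fin n) {g : L2v n} (hg : g ∈ H2v n) : projLp j g ∈ H2 :=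
  topologicalClosure_span_le_comap _ (Submodule.isClosed_topologicalClosure _)
    (by
      rintro _ ⟨⟨m, i⟩, rfl⟩
      change projLp j (singleLp i (fourierLp 2 (m : ℤ))) ∈ H2
      rw [projLp_singleLp]
      split_ifs
      · exact Submodule.le_topologicalClosure _ (Submodule.subset_span ⟨m, rfl⟩)
      · exact Submodule.zero_mem _) hg

lemma mApply_single (M : Matrix (Fin n) (Fin n) ℂ) (j : Fin n) (c : ℂ) (i : Fin n) :
    mApply M (EuclideanSpace.single j c) i = M i j * c := by
  simp [mApply, Matrix.mulVec_single, mul_comm]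

lemma mApply_diagonal (d : Fin n → ℂ) (v : EuclideanSpace ℂ (Fin n)) (i : Fin n) :
    mApply (Matrix.diagonal d) v i = d i * v i := by
  simp [mApply, Matrix.mulVec_diagonal]

end Components

lemma norm_fourierCoeff_zero_lt_one {θ : 𝕋 → ℂ} (hm : AEStronglyMeasurable θ μh)
    (hθ : ∀ᵐ x ∂μh, ‖θ x‖ = 1) (hnc : ¬ AEConst θ) : ‖fourierCoeff θ 0‖ < 1 := by
  have hθ2 : MemLp θ 2 μh := MemLp.of_bound hm 1 (hθ.mono fun x hx => hx.le)
  set u : L2 := hθ2.toLp θ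
  set e : L2 := fourierLp 2 0
  have hu : ‖u‖ = 1 := by
    rw [Lp.norm_toLp, eLpNorm_congr_norm_ae (g := fun _ => (1 : ℂ))
      (hθ.mono fun x hx => hx.trans norm_one.symm), eLpNorm_const _ two_ne_zero (NeZero.ne μh)]
    simp
  have he : ‖e‖ = 1 := orthonormal_fourier.1 0
  have hinner : ⟪e, u⟫ = fourierCoeff θ 0 := by
    rw [← fourierCoeff_congr_ae hθ2.coeFn_toLp, ← fourierBasis_repr,
      HilbertBasis.repr_apply_apply, coe_fourierBasis]
  have hle : ‖fourierCoeff θ 0‖ ≤ 1 := by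
    simpa [hinner, hu, he] using norm_inner_le_norm (𝕜 := ℂ) e u
  refine hle.lt_of_ne fun heq => hnc ?_
  have he0 : e ≠ 0 := by rintro h; simp [h] at he
  have hu0 : u ≠ 0 := by rintro h; simp [h] at hu
  obtain ⟨r, -, hr⟩ := (norm_inner_eq_norm_iff (𝕜 := ℂ) he0 hu0).1
    (by rw [hinner, heq, hu, he, mul_one])
  refine ⟨r, ?_⟩
  filter_upwards [hθ2.coeFn_toLp, Lp.coeFn_smul r e, coeFn_fourierLp (T := 2 * Real.pi) 2 0]
    with x h1 h2 h3
  rw [← h1]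
  change (u : 𝕋 → ℂ) x = r
  rw [hr, h2, Pi.smul_apply, h3, fourier_zero, smul_eq_mul, mul_one]

/-- The reproducing kernel `k₀` of the model space `H² ⊖ θH²` at the origin. -/
def modelKernelZero (θ : 𝕋 → ℂ) : 𝕋 → ℂ := fun x => 1 - conj (fourierCoeff θ 0) * θ x

lemma inH2fun_modelKernelZero {θ : 𝕋 → ℂ} (hθ : InH2fun θ) : InH2fun (modelKernelZero θ) :=
  ⟨(memLp_const 1).sub (hθ.1.const_mul _), fun m hm => by
    unfold modelKernelZero
    rw [fourierCoeff_sub (integrable_const 1)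
      ((hθ.1.integrable one_le_two).const_mul _), fourierCoeff.const_mul, fourierCoeff_const,
      if_neg hm.ne, hθ.2 m hm, mul_zero, sub_zero]⟩

lemma modelKernelZero_ne_zero {θ : 𝕋 → ℂ} {x : 𝕋} (h0 : ‖fourierCoeff θ 0‖ < 1)
    (hx : ‖θ x‖ = 1) : modelKernelZero θ x ≠ 0 := by
  intro h
  have := congrArg norm (sub_eq_zero.1 h)
  rw [norm_one, norm_mul, RCLike.norm_conj, hx, mul_one] at this
  exact h0.ne' this

lemma inner_singleLp_modelKernelZero_eq_zero {n : ℕ} {θ : Fin n → 𝕋 → ℂ} {j : Fin n}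
    (hθ : ScalarInner (θ j)) {g : H2v n}
    (hg : g ∈ matMulSet fun x => Matrix.diagonal fun i => θ i x) :
    ⟪singleLp j ((inH2fun_modelKernelZero hθ.inH2fun).1.toLp _), (g : L2v n)⟫ = 0 := by
  obtain ⟨g', hg'⟩ := hg
  have hk := (inH2fun_modelKernelZero hθ.inH2fun).1
  calc ⟪singleLp j (hk.toLp _), (g : L2v n)⟫
      = ∫ x, (θ j x - fourierCoeff (θ j) 0) * projLp j (g' : L2v n) x ∂μh := by
        rw [L2.inner_def]
        refine integral_congr_ae ?_
        filter_upwards [coeFn_singleLp j (hk.toLp _), hk.coeFn_toLp, hg',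
          coeFn_projLp j (g' : L2v n), hθ.2] with x h1 h2 h3 h4 h5
        have hunit : conj (θ j x) * θ j x = 1 := by
          rw [← Complex.normSq_eq_conj_mul_self, Complex.normSq_eq_norm_sq, h5]; simp
        rw [h1, h2, h3, h4, EuclideanSpace.inner_single_left, mApply_diagonal, modelKernelZero]
        simp only [map_sub, map_one, map_mul, Complex.conj_conj]
        linear_combination (-(fourierCoeff (θ j) 0 * (g' : L2v n) x j)) * hunit
    _ = 0 := hθ.inH2fun.integral_sub_fourierCoeff_zero_mul_eq_zero (projLp_mem_H2 j g'.2)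

theorem eq_zero_of_vanishing_on_model_space_general {n : ℕ} (A : 𝕋 → Matrix (Fin n) (Fin n) ℂ)
    (θd : Fin n → 𝕋 → ℂ)
    (hθ : ∀ j, ScalarInner (θd j)) (hθnc : ∀ j, ¬ AEConst (θd j))
    (hvanish : ∀ f : H2v n,
      (∀ g : H2v n, g ∈ matMulSet (fun x => Matrix.diagonal fun j => θd j x) →
        (inner ℂ ((f : L2v n)) ((g : L2v n)) : ℂ) = 0) →
      (fun x => mApply (A x) (((f : L2v n) : 𝕋 → EuclideanSpace ℂ (Fin n)) x))
        =ᵐ[μh] fun _ => (0 : EuclideanSpace ℂ (Fin n))) :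
    ∀ᵐ x ∂μh, A x = 0 := by
  have hcol : ∀ j, ∀ᵐ x ∂μh, ∀ i, A x i j = 0 := by
    intro j
    have hk := inH2fun_modelKernelZero (hθ j).inH2fun
    have hAk := hvanish ⟨singleLp j (hk.1.toLp _), singleLp_mem_H2v j hk.toLp_mem_H2⟩
      fun g hg => inner_singleLp_modelKernelZero_eq_zero (hθ j) hg
    have h0 := norm_fourierCoeff_zero_lt_one (hθ j).1.1.1 (hθ j).2 (hθnc j)
    filter_upwards [hAk, coeFn_singleLp j (hk.1.toLp _), hk.1.coeFn_toLp, (hθ j).2]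
      with x hAx hfx hkx hθx i
    have hcoord := congrArg (fun v : EuclideanSpace ℂ (Fin n) => v i) hAx
    simp only [hfx, hkx, mApply_single] at hcoord
    exact (mul_eq_zero.1 hcoord).resolve_right (modelKernelZero_ne_zero h0 hθx)
  filter_upwards [ae_all_iff.2 hcol] with x hx
  ext i j
  exact hx j i

/-- **Lemma 5.6**: let `A ∈ H²_{Mₙ}` and let `Θ = diag(θ₁, …, θₙ)` be a diagonal inner
matrix function with all diagonal entries nonconstant inner functions.  If `Af = 0` (a.e.)
for every `f` in the model space `H_Θ = H²_{ℂⁿ} ⊖ ΘH²_{ℂⁿ}`, then `A = 0` (a.e.). -/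
theorem eq_zero_of_vanishing_on_model_space {n : ℕ} (A : 𝕋 → Matrix (Fin n) (Fin n) ℂ)
    (hA : MatInH2 A) (θd : Fin n → 𝕋 → ℂ)
    (hθ : ∀ j, ScalarInner (θd j)) (hθnc : ∀ j, ¬ AEConst (θd j))
    (hvanish : ∀ f : H2v n,
      (∀ g : H2v n, g ∈ matMulSet (fun x => Matrix.diagonal fun j => θd j x) →
        (inner ℂ ((f : L2v n)) ((g : L2v n)) : ℂ) = 0) →
      (fun x => mApply (A x) (((f : L2v n) : 𝕋 → EuclideanSpace ℂ (Fin n)) x))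
        =ᵐ[μh] fun _ => (0 : EuclideanSpace ℂ (Fin n))) :
    ∀ᵐ x ∂μh, A x = 0 :=
  eq_zero_of_vanishing_on_model_space_general A θd hθ hθnc hvanish

end Paper
end
end
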